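/- Let β > 1 be the root of x² − px + 1 with integer p ≥ 3, let m ∈ ℕ with m ≥ ⌊β⌋ = p − 1, and let Ω = [ 0, mβ/(β − 1) ). Set 𝒮 = { z ∈ ℤ + ℤβ : 0 < z < m and z′ ∈ Ω }. Then 𝒮 is finite, and for every z > 0 with z ∈ Σ_β(Ω) and z ∉ X^m(β) there exist j ∈ ℕ and s ∈ 𝒮 such that z = m ∑_{i=0}^{j−1} β^i + s β^j. -/

import Mathlib

/-!
Since `β' = 1/β`, dividing by `β` is an automorphism of `ℤ + ℤβ`, and it acts on Galois
conjugates as multiplication by `β`. Thus `z ↦ (z - d)/β` with an integer digit `d` maps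
`z'` to `β (z' - d)`. A positive `z` with `z' ∈ [0, β)` is expanded greedily with the digit
`⌊z'⌋ ≤ ⌊β⌋ ≤ m`, which keeps the conjugate in `[0, β)`. A positive `z ∈ Σ_β(Ω)` with `z ≥ m`
either has `z' < m`, and one greedy digit reduces it to the previous case, or `z' ≥ m`, and
removing the digit `m` keeps the conjugate in `Ω`. Every step strictly decreases `z`, and a
cut-and-project set with bounded window meets every bounded interval in a finite set, so the
process terminates: in `X^m(β)`, or in `𝒮` after `j` digits `m`.
-/

/-- The spectrum `X^m(β)`: sums `∑_{j=0}^n a_j β^j` with digits `a_j ∈ {0,1,…,m}`. -/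
def Xspec (β : ℝ) (m : ℕ) : Set ℝ :=
  {x | ∃ (n : ℕ) (c : ℕ → ℕ), (∀ j ≤ n, c j ≤ m) ∧
    x = ∑ j ∈ Finset.range (n + 1), (c j : ℝ) * β ^ j}

/-- The cut-and-project set `Σ_β(Ω) = { x ∈ ℤ + ℤβ : x′ ∈ Ω }`, where `x′ = a + bβ′`
for `x = a + bβ`. -/
def sigmaCP (β β' : ℝ) (Ω : Set ℝ) : Set ℝ :=
  {x | ∃ a b : ℤ, x = (a : ℝ) + (b : ℝ) * β ∧ (a : ℝ) + (b : ℝ) * β' ∈ Ω}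

open Set Bornology

def IsGaloisConj (β β' z z' : ℝ) : Prop :=
  ∃ a b : ℤ, z = a + b * β ∧ z' = a + b * β'

theorem mem_sigmaCP_iff {β β' z : ℝ} {Ω : Set ℝ} :
    z ∈ sigmaCP β β' Ω ↔ ∃ z' ∈ Ω, IsGaloisConj β β' z z' := by
  constructor
  · rintro ⟨a, b, rfl, h⟩
    exact ⟨_, h, a, b, rfl, rfl⟩
  · rintro ⟨_, h, a, b, rfl, rfl⟩
    exact ⟨a, b, rfl, h⟩

theorem zero_mem_Xspec (β : ℝ) (m : ℕ) : (0 : ℝ) ∈ Xspec β m :=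
  ⟨0, 0, fun _ _ => Nat.zero_le m, by simp⟩

theorem natCast_add_mul_mem_Xspec {β x : ℝ} {m d : ℕ} (hd : d ≤ m) (hx : x ∈ Xspec β m) :
    (d : ℝ) + β * x ∈ Xspec β m := by
  obtain ⟨n, c, hc, rfl⟩ := hx
  refine ⟨n + 1, fun j => if j = 0 then d else c (j - 1), ?_, ?_⟩
  · rintro (_ | j) hj
    · simpa using hd
    · simpa using hc j (by omega)
  · conv_rhs => rw [Finset.sum_range_succ']
    simp only [Nat.succ_ne_zero, reduceIte, Nat.add_sub_cancel, pow_zero, mul_one]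
    rw [Finset.mul_sum, add_comm]
    congr 1
    exact Finset.sum_congr rfl fun j _ => by ring

theorem finite_sigmaCP_inter {β β' : ℝ} (hββ' : β ≠ β') {Ω I : Set ℝ} (hΩ : IsBounded Ω)
    (hI : IsBounded I) : (sigmaCP β β' Ω ∩ I).Finite := by
  obtain ⟨R, hR⟩ := (hΩ.union hI).subset_closedBall 0
  set K := 2 * R / |β - β'|
  have hfin : (Metric.closedBall (0 : ℤ × ℤ) (R + K * |β| + K)).Finite :=
    (isCompact_closedBall _ _).finite_of_discrete
  refine (hfin.image fun q => (q.1 : ℝ) + q.2 * β).subset ?_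
  rintro _ ⟨⟨a, b, rfl, hz'⟩, hz⟩
  have hz'R : |(a : ℝ) + b * β'| ≤ R := by simpa using hR (Or.inl hz')
  have hzR : |(a : ℝ) + b * β| ≤ R := by simpa using hR (Or.inr hz)
  have hb : |(b : ℝ)| ≤ K := by
    rw [le_div_iff₀ (abs_pos.2 (sub_ne_zero.2 hββ')), ← abs_mul]
    calc |(b : ℝ) * (β - β')| = |((a : ℝ) + b * β) - (a + b * β')| := by ring_nf
      _ ≤ |(a : ℝ) + b * β| + |(a : ℝ) + b * β'| := abs_sub _ _
      _ ≤ 2 * R := by linarith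
  have ha : |(a : ℝ)| ≤ R + K * |β| := by
    calc |(a : ℝ)| = |((a : ℝ) + b * β) - b * β| := by ring_nf
      _ ≤ |(a : ℝ) + b * β| + |(b : ℝ)| * |β| := (abs_sub _ _).trans_eq (by rw [abs_mul])
      _ ≤ R + K * |β| := by gcongr
  have hK : 0 ≤ K := (abs_nonneg _).trans hb
  have hRK : 0 ≤ R + K * |β| := (abs_nonneg _).trans ha
  refine ⟨(a, b), ?_, rfl⟩
  rw [mem_closedBall_zero_iff, norm_prod_le_iff, Int.norm_eq_abs, Int.norm_eq_abs]
  exact ⟨by linarith, by linarith [mul_nonneg hK (abs_nonneg β), (abs_nonneg _).trans hzR]⟩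

theorem wellFoundedOn_sigmaCP_inter_Ioi {β β' : ℝ} (hββ' : β ≠ β') {Ω : Set ℝ}
    (hΩ : IsBounded Ω) (c : ℝ) : (sigmaCP β β' Ω ∩ Ioi c).WellFoundedOn (· < ·) := by
  rw [wellFoundedOn_iff_no_descending_seq]
  intro f hf
  have hanti : StrictAnti f := fun _ _ h => f.map_rel_iff.2 h
  have hsub : range f ⊆ sigmaCP β β' Ω ∩ Icc c (f 0) := by
    rintro _ ⟨n, rfl⟩
    exact ⟨(hf n).1, (hf n).2.le, hanti.antitone n.zero_le⟩
  exact infinite_range_of_injective f.injective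
    ((finite_sigmaCP_inter hββ' hΩ (Metric.isBounded_Icc c (f 0))).subset hsub)

-- `[0, mβ/(β - 1))` is invariant under removing the digit `m`: its right end is the fixed
-- point of `x ↦ β (x - m)`.
theorem mul_sub_mem_Ico_of_mem_Ico {β m x : ℝ} (hβ : 1 < β)
    (hx : x ∈ Ico m (m * β / (β - 1))) : β * (x - m) ∈ Ico 0 (m * β / (β - 1)) := by
  have hW : m * β / (β - 1) * (β - 1) = m * β := div_mul_cancel₀ _ (by linarith)
  constructor <;> nlinarith [hx.1, hx.2]

section QuadraticUnit

variable {β β' : ℝ} {p : ℤ} {m : ℕ} {z z' : ℝ}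

theorem conj_mem_Ioo (hβ : 1 < β) (hprod : β * β' = 1) : β' ∈ Ioo 0 1 := by
  constructor <;> nlinarith

theorem two_lt_of_add_eq_intCast (hβ : 1 < β) (hsum : β + β' = p) (hprod : β * β' = 1) :
    2 < β := by
  obtain ⟨h0, h1⟩ := conj_mem_Ioo hβ hprod
  have hp : (2 : ℝ) < p := by nlinarith
  have hp3 : (3 : ℝ) ≤ p := by exact_mod_cast (show (2 : ℤ) < p by exact_mod_cast hp)
  linarith

theorem IsGaloisConj.conj_mul_sub (hsum : β + β' = p) (hprod : β * β' = 1)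
    (h : IsGaloisConj β β' z z') (d : ℤ) :
    IsGaloisConj β β' (β' * (z - d)) (β * (z' - d)) := by
  obtain ⟨a, b, rfl, rfl⟩ := h
  refine ⟨(a - d) * p + b, d - a, ?_, ?_⟩ <;> push_cast
  · linear_combination b * hprod + (a - d) * hsum
  · linear_combination b * hprod + (a - d) * hsum

theorem IsGaloisConj.le_of_pos (hβ : 1 < β) (hsum : β + β' = p) (hprod : β * β' = 1)
    (h : IsGaloisConj β β' z z') (hz : 0 < z) (hz' : z' < β) : z' ≤ z := by
  obtain ⟨a, b, rfl, rfl⟩ := h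
  obtain ⟨h0, h1⟩ := conj_mem_Ioo hβ hprod
  suffices hb : 0 ≤ b by nlinarith [(by exact_mod_cast hb : (0 : ℝ) ≤ b)]
  by_contra! hb
  rcases (show b = -1 ∨ b ≤ -2 by omega) with rfl | hb
  · -- then `p - 1 < β < a < β + β' = p`
    have hlo : ((p - 1 : ℤ) : ℝ) < a := by push_cast at hz ⊢; linarith
    have hhi : (a : ℝ) < p := by push_cast at hz'; linarith
    have : p - 1 < a ∧ a < p := ⟨by exact_mod_cast hlo, by exact_mod_cast hhi⟩
    omega
  · have hb' : (b : ℝ) ≤ -2 := by exact_mod_cast hb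
    nlinarith [two_lt_of_add_eq_intCast hβ hsum hprod]

theorem mem_Xspec_of_floor_digit (hβ : 1 < β) (hsum : β + β' = p) (hprod : β * β' = 1)
    (h : IsGaloisConj β β' z z') (hz' : 0 ≤ z') (hdz : (⌊z'⌋₊ : ℝ) ≤ z) (hdm : ⌊z'⌋₊ ≤ m)
    (ih : ∀ w ∈ sigmaCP β β' (Ico 0 β), 0 < w → w < z → w ∈ Xspec β m) :
    z ∈ Xspec β m := by
  set d := ⌊z'⌋₊
  obtain ⟨h0, h1⟩ := conj_mem_Ioo hβ hprod
  have hzw : z = d + β * (β' * (z - d)) := by rw [← mul_assoc, hprod]; ring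
  rw [hzw]
  refine natCast_add_mul_mem_Xspec hdm ?_
  rcases (mul_nonneg h0.le (sub_nonneg.2 hdz)).eq_or_lt with hw0 | hw0
  · exact hw0 ▸ zero_mem_Xspec β m
  have hw' : β * (z' - d) ∈ Ico 0 β := by
    constructor <;> nlinarith [Nat.floor_le hz', Nat.lt_floor_add_one z']
  refine ih _ (mem_sigmaCP_iff.2 ⟨_, hw', by simpa using h.conj_mul_sub hsum hprod d⟩) hw0 ?_
  nlinarith

theorem mem_Xspec_of_conj_mem_Ico (hβ : 1 < β) (hsum : β + β' = p) (hprod : β * β' = 1)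
    (hm : ⌊β⌋ ≤ m) (hz : z ∈ sigmaCP β β' (Ico 0 β)) (hz0 : 0 < z) : z ∈ Xspec β m := by
  have hββ' : β ≠ β' := by linarith [(conj_mem_Ioo hβ hprod).2]
  refine (wellFoundedOn_sigmaCP_inter_Ioi hββ' (Metric.isBounded_Ico 0 β) 0).induction
    ⟨hz, hz0⟩ ?_
  rintro z ⟨hz, hz0⟩ ih
  obtain ⟨z', hz', h⟩ := mem_sigmaCP_iff.1 hz
  refine mem_Xspec_of_floor_digit hβ hsum hprod h hz'.1
    ((Nat.floor_le hz'.1).trans (h.le_of_pos hβ hsum hprod hz0 hz'.2)) ?_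
    fun w hw hw0 hwz => ih w ⟨hw, hw0⟩ hwz
  have : (⌊z'⌋₊ : ℤ) ≤ ⌊β⌋ :=
    Int.le_floor.2 (by push_cast; linarith [Nat.floor_le hz'.1, hz'.2])
  omega

theorem mem_Xspec_or_eq_geom_sum_add (hβ : 1 < β) (hsum : β + β' = p) (hprod : β * β' = 1)
    (hm : ⌊β⌋ ≤ m) (hz : z ∈ sigmaCP β β' (Ico 0 (m * β / (β - 1)))) (hz0 : 0 < z) :
    z ∈ Xspec β m ∨ ∃ (j : ℕ) (s : ℝ),
      (s ∈ sigmaCP β β' (Ico 0 (m * β / (β - 1))) ∧ 0 < s ∧ s < m) ∧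
        z = m * ∑ i ∈ Finset.range j, β ^ i + s * β ^ j := by
  obtain ⟨h0, h1⟩ := conj_mem_Ioo hβ hprod
  have hββ' : β ≠ β' := by linarith
  apply (wellFoundedOn_sigmaCP_inter_Ioi hββ' (Metric.isBounded_Ico _ _) 0).induction ⟨hz, hz0⟩
  rintro z ⟨hz, hz0⟩ ih
  rcases lt_or_ge z m with hzm | hzm
  · exact Or.inr ⟨0, z, ⟨hz, hz0, hzm⟩, by simp⟩
  obtain ⟨z', hz', h⟩ := mem_sigmaCP_iff.1 hz
  rcases lt_or_ge z' m with hz'm | hz'm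
  · -- a single greedy digit `⌊z'⌋₊ < m` leads into the window `[0, β)`
    refine Or.inl (mem_Xspec_of_floor_digit hβ hsum hprod h hz'.1 ?_ ?_
      fun w hw hw0 _ => mem_Xspec_of_conj_mem_Ico hβ hsum hprod hm hw hw0)
    · linarith [Nat.floor_le hz'.1]
    · exact ((Nat.floor_lt hz'.1).2 hz'm).le
  set w := β' * (z - m)
  have hzw : z = m + β * w := by rw [← mul_assoc, hprod]; ring
  have hw : w ∈ sigmaCP β β' (Ico 0 (m * β / (β - 1))) :=
    mem_sigmaCP_iff.2 ⟨_, mul_sub_mem_Ico_of_mem_Ico hβ ⟨hz'm, hz'.2⟩,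
      by simpa using h.conj_mul_sub hsum hprod m⟩
  rcases (show 0 ≤ w from mul_nonneg h0.le (sub_nonneg.2 hzm)).eq_or_lt with hw0 | hw0
  · rw [hzw, ← hw0]
    exact Or.inl (natCast_add_mul_mem_Xspec le_rfl (zero_mem_Xspec β m))
  rcases ih w ⟨hw, hw0⟩ (by nlinarith) with hX | ⟨j, s, hs, hwj⟩
  · exact Or.inl (hzw ▸ natCast_add_mul_mem_Xspec le_rfl hX)
  · refine Or.inr ⟨j + 1, s, hs, ?_⟩
    rw [hzw, hwj, geom_sum_succ, pow_succ']
    ring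

end QuadraticUnit

theorem cutProject_minus_spectrum_structure_minus_general (β : ℝ) (p : ℤ)
    (hβ : 1 < β) (heq : β ^ 2 = p * β - 1)
    (m : ℕ) (hm : ⌊β⌋ ≤ (m : ℤ)) :
    {z : ℝ | z ∈ sigmaCP β ((p : ℝ) - β) (Set.Ico (0 : ℝ) ((m : ℝ) * β / (β - 1))) ∧
        0 < z ∧ z < (m : ℝ)}.Finite ∧
    ∀ z : ℝ, 0 < z →
      z ∈ sigmaCP β ((p : ℝ) - β) (Set.Ico (0 : ℝ) ((m : ℝ) * β / (β - 1))) →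
      z ∉ Xspec β m →
      ∃ (j : ℕ) (s : ℝ),
        (s ∈ sigmaCP β ((p : ℝ) - β) (Set.Ico (0 : ℝ) ((m : ℝ) * β / (β - 1))) ∧
          0 < s ∧ s < (m : ℝ)) ∧
        z = (m : ℝ) * ∑ i ∈ Finset.range j, β ^ i + s * β ^ j := by
  have hsum : β + (p - β) = p := by ring
  have hprod : β * (p - β) = 1 := by linear_combination -heq
  have hββ' : β ≠ p - β := by linarith [(conj_mem_Ioo hβ hprod).2]
  refine ⟨?_, fun z hz0 hz hzX =>
    (mem_Xspec_or_eq_geom_sum_add hβ hsum hprod hm hz hz0).resolve_left hzX⟩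
  refine (finite_sigmaCP_inter hββ' (Metric.isBounded_Ico 0 ((m : ℝ) * β / (β - 1)))
    (Metric.isBounded_Icc 0 (m : ℝ))).subset ?_
  exact fun z ⟨hz, hz0, hzm⟩ => ⟨hz, hz0.le, hzm.le⟩

/-- Lemma (case `β² = pβ - 1`, `p ≥ 3`, `m ≥ ⌊β⌋`): with `Ω = [0, mβ/(β-1))` and
`𝒮 = { z ∈ Σ_β(Ω) : 0 < z < m }`, the set `𝒮` is finite and every positive
`z ∈ Σ_β(Ω) \ X^m(β)` has the form `z = m ∑_{i<j} β^i + s β^j` with `s ∈ 𝒮`. -/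
theorem cutProject_minus_spectrum_structure_minus (β : ℝ) (p : ℤ)
    (hβ : 1 < β) (hp : 3 ≤ p) (heq : β ^ 2 = p * β - 1)
    (m : ℕ) (hm : ⌊β⌋ ≤ (m : ℤ)) :
    {z : ℝ | z ∈ sigmaCP β ((p : ℝ) - β) (Set.Ico (0 : ℝ) ((m : ℝ) * β / (β - 1))) ∧
        0 < z ∧ z < (m : ℝ)}.Finite ∧
    ∀ z : ℝ, 0 < z →
      z ∈ sigmaCP β ((p : ℝ) - β) (Set.Ico (0 : ℝ) ((m : ℝ) * β / (β - 1))) →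
      z ∉ Xspec β m →
      ∃ (j : ℕ) (s : ℝ),
        (s ∈ sigmaCP β ((p : ℝ) - β) (Set.Ico (0 : ℝ) ((m : ℝ) * β / (β - 1))) ∧
          0 < s ∧ s < (m : ℝ)) ∧
        z = (m : ℝ) * ∑ i ∈ Finset.range j, β ^ i + s * β ^ j :=
  cutProject_minus_spectrum_structure_minus_general β p hβ heq m hm
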